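/- arXiv:2012.12605 — 4 statements merged into one kernel-verified Lean document; each statement's English description precedes it below -/
import Mathlib

section
/- Let p ≥ 2, γ > 2 be real numbers and let λ > 0, θ₁ > 0, θ₂ ≥ 0, θ₃ ≥ 0. Then there exists a constant C ≥ 0, depending only on p, γ, λ, θ₁, θ₂, θ₃, such that for all real numbers x, y ≥ 0 with √λ · x ≤ y, one has −p θ₁ x^{p−2} y^γ + p θ₂ x^p + p θ₃ x^{p−2} ≤ −p θ₁ λ^{γ/2} x^p − θ₁ x^{p−2} y^γ + C. -/
/-- For exponents `0 ≤ a < b` and any `ε > 0`, `x ^ a ≤ ε * x ^ b + K` for some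
constant `K ≥ 0`. -/
lemma aux_rpow_bound (a b ε : ℝ) (ha : 0 ≤ a) (hab : a < b) (hε : 0 < ε) :
    ∃ K, 0 ≤ K ∧ ∀ x : ℝ, 0 ≤ x → x ^ a ≤ ε * x ^ b + K := by
  set M : ℝ := max 1 ((1/ε) ^ (1/(b-a))) with hM
  have hM1 : (1:ℝ) ≤ M := le_max_left _ _
  have hM0 : (0:ℝ) ≤ M := zero_le_one.trans hM1
  refine ⟨M ^ a, Real.rpow_nonneg hM0 a, fun x hx => ?_⟩
  rcases le_or_gt x M with h | h
  · have h1 : x ^ a ≤ M ^ a := Real.rpow_le_rpow hx h ha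
    have h2 : 0 ≤ ε * x ^ b := by positivity
    linarith
  · have hx1 : 1 ≤ x := hM1.trans h.le
    have hxpos : 0 < x := lt_of_lt_of_le one_pos hx1
    have hba : 0 < b - a := sub_pos.2 hab
    have h2 : (1/ε) ≤ x ^ (b - a) := by
      have h2' : ((1/ε) ^ (1/(b-a))) ^ (b - a) ≤ x ^ (b - a) :=
        Real.rpow_le_rpow (Real.rpow_nonneg (by positivity) _)
          ((le_max_right _ _).trans h.le) hba.le
      rwa [← Real.rpow_mul (by positivity), one_div_mul_cancel hba.ne',
        Real.rpow_one] at h2'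
    have h3 : x ^ a * x ^ (b - a) = x ^ b := by
      rw [← Real.rpow_add hxpos]; ring_nf
    have h4 : x ^ a * (1/ε) ≤ x ^ b := by
      rw [← h3]; exact mul_le_mul_of_nonneg_left h2 (Real.rpow_nonneg hx a)
    have h5 : x ^ a ≤ ε * x ^ b := by
      calc x ^ a = ε * (x ^ a * (1/ε)) := by field_simp
        _ ≤ ε * x ^ b := mul_le_mul_of_nonneg_left h4 hε.le
    have h6 : 0 ≤ M ^ a := Real.rpow_nonneg hM0 a
    linarith

lemma aux_coef_bound (q T : ℝ) (hq : 0 ≤ q) (hT : 0 ≤ T) :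
    q * (T / (2 * (q + 1))) ≤ T / 2 := by
  have hD : (0:ℝ) < 2 * (q + 1) := by linarith
  rw [← mul_div_assoc, div_le_div_iff₀ hD two_pos]
  nlinarith

set_option maxHeartbeats 1000000 in
/-- Coercivity estimate for locally monotone SPDEs with `γ > 2`: real powers are
interpreted via `Real.rpow`. -/
theorem stmt_10 (p γ lam θ₁ θ₂ θ₃ : ℝ) (hp : 2 ≤ p) (hγ : 2 < γ) (hlam : 0 < lam)
    (hθ₁ : 0 < θ₁) (hθ₂ : 0 ≤ θ₂) (hθ₃ : 0 ≤ θ₃) :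
    ∃ C : ℝ, 0 ≤ C ∧ ∀ x y : ℝ, 0 ≤ x → 0 ≤ y → Real.sqrt lam * x ≤ y →
      -p * θ₁ * x ^ (p - 2) * y ^ γ + p * θ₂ * x ^ p + p * θ₃ * x ^ (p - 2)
        ≤ -p * θ₁ * lam ^ (γ / 2) * x ^ p - θ₁ * x ^ (p - 2) * y ^ γ + C := by
  set s : ℝ := lam ^ (γ / 2) with hs
  have hspos : 0 < s := Real.rpow_pos_of_pos hlam _
  have hp2 : (0:ℝ) ≤ p - 2 := by linarith
  have hγ0 : (0:ℝ) ≤ γ := by linarith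
  have hb : p < p + γ - 2 := by linarith
  have hb2 : p - 2 < p + γ - 2 := by linarith
  set ε₁ : ℝ := θ₁ * s / (2 * (p * θ₂ + p * θ₁ * s + 1)) with hε₁
  set ε₂ : ℝ := θ₁ * s / (2 * (p * θ₃ + 1)) with hε₂
  have hppos : 0 < p := by linarith
  have hε₁pos : 0 < ε₁ := by positivity
  have hε₂pos : 0 < ε₂ := by positivity
  clear_value s
  clear_value ε₁ ε₂
  obtain ⟨K₁, hK₁, hb₁⟩ := aux_rpow_bound p (p + γ - 2) ε₁ (by linarith) hb hε₁pos
  obtain ⟨K₂, hK₂, hb₂⟩ := aux_rpow_bound (p - 2) (p + γ - 2) ε₂ hp2 hb2 hε₂pos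
  refine ⟨(p * θ₂ + p * θ₁ * s) * K₁ + p * θ₃ * K₂, by positivity, ?_⟩
  intro x y hx hy hxy
  -- key: x ^ (p-2) * y ^ γ ≥ s * x ^ (p + γ - 2)
  have hsl : Real.sqrt lam = lam ^ (1/2 : ℝ) := Real.sqrt_eq_rpow lam
  have hyγ : s * x ^ γ ≤ y ^ γ := by
    have h1 : (Real.sqrt lam * x) ^ γ ≤ y ^ γ :=
      Real.rpow_le_rpow (by positivity) hxy hγ0
    have h2 : (Real.sqrt lam * x) ^ γ = s * x ^ γ := by
      rw [Real.mul_rpow (Real.sqrt_nonneg _) hx, hsl, ← Real.rpow_mul hlam.le,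
        show (1/2:ℝ) * γ = γ / 2 by ring, hs]
    linarith [h2 ▸ h1]
  have hkey : s * x ^ (p + γ - 2) ≤ x ^ (p - 2) * y ^ γ := by
    have h3 : x ^ (p + γ - 2) = x ^ (p - 2) * x ^ γ := by
      rw [← Real.rpow_add' hx (by linarith)]; ring_nf
    have h4 : x ^ (p - 2) * (s * x ^ γ) ≤ x ^ (p - 2) * y ^ γ :=
      mul_le_mul_of_nonneg_left hyγ (Real.rpow_nonneg hx _)
    nlinarith [Real.rpow_nonneg hx (p - 2)]
  have hB₁ := hb₁ x hx
  have hB₂ := hb₂ x hx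
  set A : ℝ := x ^ (p - 2) with hA
  set B : ℝ := y ^ γ with hB
  set X : ℝ := x ^ p with hX
  set Z : ℝ := x ^ (p + γ - 2) with hZ
  have hA0 : 0 ≤ A := Real.rpow_nonneg hx _
  have hB0 : 0 ≤ B := Real.rpow_nonneg hy _
  have hX0 : 0 ≤ X := Real.rpow_nonneg hx _
  have hZ0 : 0 ≤ Z := Real.rpow_nonneg hx _
  clear_value A B X Z
  have hc₁ : (p * θ₂ + p * θ₁ * s) * ε₁ ≤ θ₁ * s / 2 := by
    rw [hε₁]; exact aux_coef_bound _ _ (by positivity) (by positivity)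
  have hc₂ : p * θ₃ * ε₂ ≤ θ₁ * s / 2 := by
    rw [hε₂]; exact aux_coef_bound _ _ (by positivity) (by positivity)
  have hM₁ : (p * θ₂ + p * θ₁ * s) * X
      ≤ (θ₁ * s / 2) * Z + (p * θ₂ + p * θ₁ * s) * K₁ := by
    have h5 := mul_le_mul_of_nonneg_left hB₁ (by positivity : (0:ℝ) ≤ p * θ₂ + p * θ₁ * s)
    have h6 := mul_le_mul_of_nonneg_right hc₁ hZ0
    linarith [h5, h6]
  have hM₂ : p * θ₃ * A ≤ (θ₁ * s / 2) * Z + p * θ₃ * K₂ := by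
    have h5 := mul_le_mul_of_nonneg_left hB₂ (by positivity : (0:ℝ) ≤ p * θ₃)
    have h6 := mul_le_mul_of_nonneg_right hc₂ hZ0
    linarith [h5, h6]
  have t1 : θ₁ * (s * Z) ≤ θ₁ * (A * B) := mul_le_mul_of_nonneg_left hkey hθ₁.le
  have t2 : θ₁ * (A * B) ≤ (p - 1) * (θ₁ * (A * B)) :=
    le_mul_of_one_le_left (by positivity) (by linarith)
  linarith [t1, t2, hM₁, hM₂]
end

section
/- Let p ≥ 2 be a real number, let λ > 0, θ₁ > 0, θ₂ ≥ 0, θ₃ ≥ 0, and set θ̃ = θ₁ − (θ₂ + θ₃)/λ; assume θ̃ > 0. Then for all real numbers x, y ≥ 0 with √λ · x ≤ y, one has −p θ₁ x^{p−2} y² + p θ₂ x^p + p θ₃ x^{p−2} ≤ −(p − 1/2) λ θ̃ x^p − (θ̃/2) x^{p−2} y² + 2 θ₃ ((p−2)/p)^{(p−2)/2}. -/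
/-!
With `A = x^(p-2) y²` and `B = x^p`, the hypothesis `√λ x ≤ y` gives `λ B ≤ A`. Writing
`θ₂ + θ₃ = λ (θ₁ - θ̃)`, the claim reduces to `(p θ₁ - θ̃/2)(A - λ B) ≥ 0` together with the
one-variable bound `p x^(p-2) - p x^p ≤ 2 ((p-2)/p)^((p-2)/2)`. The latter says that
`(a + 1) t^a (1 - t)` (with `a = (p-2)/2`, `t = x²`) is maximal at `t = a/(a+1)`, which is the
weighted AM-GM inequality `r^a ≤ a/(a+1) · r^(a+1) + 1/(a+1)`.
-/

open Real

lemma add_one_mul_rpow_le_mul_rpow_add_one_add_one {a r : ℝ} (ha : 0 ≤ a) (hr : 0 ≤ r) :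
    (a + 1) * r ^ a ≤ a * r ^ (a + 1) + 1 := by
  have ha1 : 0 < a + 1 := by linarith
  have amgm := geom_mean_le_arith_mean2_weighted (div_nonneg ha ha1.le) (inv_nonneg.2 ha1.le)
    (rpow_nonneg hr (a + 1)) zero_le_one (by field_simp)
  rw [← rpow_mul hr, mul_div_cancel₀ a ha1.ne', one_rpow, mul_one, mul_one] at amgm
  calc (a + 1) * r ^ a ≤ (a + 1) * (a / (a + 1) * r ^ (a + 1) + (a + 1)⁻¹) := by gcongr
    _ = a * r ^ (a + 1) + 1 := by field_simp

lemma add_one_mul_rpow_mul_one_sub_le {a t : ℝ} (ha : 0 ≤ a) (ht : 0 ≤ t) :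
    (a + 1) * t ^ a * (1 - t) ≤ (a / (a + 1)) ^ a := by
  rcases ha.eq_or_lt with rfl | ha
  · simpa using ht
  set c := a / (a + 1)
  have hc0 : 0 < c := by positivity
  have hca : c * (a + 1) = a := div_mul_cancel₀ a (by positivity)
  obtain ⟨r, hr, rfl⟩ : ∃ r, 0 ≤ r ∧ t = c * r := ⟨t / c, by positivity, by field_simp⟩
  have key := add_one_mul_rpow_le_mul_rpow_add_one_add_one ha.le hr
  rw [rpow_add_one' hr (by linarith)] at key
  calc (a + 1) * (c * r) ^ a * (1 - c * r)
      = c ^ a * ((a + 1) * r ^ a - a * (r ^ a * r)) := by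
        rw [mul_rpow hc0.le hr]
        linear_combination (-(c ^ a * r ^ a * r)) * hca
    _ ≤ c ^ a * 1 := by gcongr; linarith
    _ = c ^ a := mul_one _

lemma mul_rpow_sub_two_sub_mul_rpow_le {p x : ℝ} (hp : 2 ≤ p) (hx : 0 ≤ x) :
    p * x ^ (p - 2) - p * x ^ p ≤ 2 * ((p - 2) / p) ^ ((p - 2) / 2) := by
  set a := (p - 2) / 2 with ha
  have hpow : x ^ (p - 2) = (x ^ 2) ^ a := by
    rw [← rpow_natCast, ← rpow_mul hx]
    congr 1
    ring
  have hxp : x ^ p = x ^ (p - 2) * x ^ 2 := by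
    rw [← rpow_add_natCast' hx (by push_cast; linarith)]
    norm_num
  have hbound := add_one_mul_rpow_mul_one_sub_le (by positivity : 0 ≤ a) (sq_nonneg x)
  have ha1 : a + 1 = p / 2 := by rw [ha]; ring
  rw [ha1, ha, div_div_div_cancel_right₀ two_ne_zero, ← ha] at hbound
  calc p * x ^ (p - 2) - p * x ^ p = 2 * (p / 2 * (x ^ 2) ^ a * (1 - x ^ 2)) := by
        rw [hxp, hpow]
        ring
    _ ≤ 2 * ((p - 2) / p) ^ a := by gcongr

lemma mul_rpow_le_rpow_sub_two_mul_sq {lam p x y : ℝ} (hlam : 0 ≤ lam) (hp : p ≠ 0)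
    (hx : 0 ≤ x) (hxy : √lam * x ≤ y) :
    lam * x ^ p ≤ x ^ (p - 2) * y ^ 2 := by
  have hsq : lam * x ^ 2 ≤ y ^ 2 := by
    simpa [mul_pow, sq_sqrt hlam] using pow_le_pow_left₀ (by positivity) hxy 2
  calc lam * x ^ p = x ^ (p - 2) * (lam * x ^ 2) := by
        rw [← rpow_natCast, mul_left_comm, ← rpow_add' hx (by simpa using hp)]
        norm_num
    _ ≤ x ^ (p - 2) * y ^ 2 := by gcongr

theorem stmt_11_general (p lam θ₁ θ₂ θ₃ : ℝ) (hp : 2 ≤ p) (hlam : 0 < lam)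
    (hθ₁ : 0 < θ₁) (hθ₂ : 0 ≤ θ₂) (hθ₃ : 0 ≤ θ₃) :
    ∀ x y : ℝ, 0 ≤ x → 0 ≤ y → Real.sqrt lam * x ≤ y →
      -p * θ₁ * x ^ (p - 2) * y ^ (2 : ℕ) + p * θ₂ * x ^ p + p * θ₃ * x ^ (p - 2)
        ≤ -(p - 1 / 2) * lam * (θ₁ - (θ₂ + θ₃) / lam) * x ^ p
          - ((θ₁ - (θ₂ + θ₃) / lam) / 2) * x ^ (p - 2) * y ^ (2 : ℕ)
          + 2 * θ₃ * ((p - 2) / p) ^ ((p - 2) / 2) := by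
  intro x y hx _ hxy
  set θ := θ₁ - (θ₂ + θ₃) / lam
  have hp0 : p ≠ 0 := by linarith
  have hgap : 0 ≤ x ^ (p - 2) * y ^ 2 - lam * x ^ p := by
    linarith [mul_rpow_le_rpow_sub_two_mul_sq hlam.le hp0 hx hxy]
  have hcoef : 0 ≤ p * θ₁ - θ / 2 := by
    have : θ ≤ θ₁ := sub_le_self _ (by positivity)
    nlinarith
  have hθ₃_bound := mul_le_mul_of_nonneg_left (mul_rpow_sub_two_sub_mul_rpow_le hp hx) hθ₃
  have hsum : θ₂ + θ₃ = lam * (θ₁ - θ) := by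
    simp only [θ]
    field_simp
    ring
  linear_combination mul_nonneg hcoef hgap + hθ₃_bound + p * x ^ p * hsum

/-- Coercivity estimate for locally monotone SPDEs in the critical case `γ = 2`:
real powers are interpreted via `Real.rpow`. -/
theorem stmt_11 (p lam θ₁ θ₂ θ₃ : ℝ) (hp : 2 ≤ p) (hlam : 0 < lam)
    (hθ₁ : 0 < θ₁) (hθ₂ : 0 ≤ θ₂) (hθ₃ : 0 ≤ θ₃)
    (hθ : 0 < θ₁ - (θ₂ + θ₃) / lam) :
    ∀ x y : ℝ, 0 ≤ x → 0 ≤ y → Real.sqrt lam * x ≤ y →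
      -p * θ₁ * x ^ (p - 2) * y ^ (2 : ℕ) + p * θ₂ * x ^ p + p * θ₃ * x ^ (p - 2)
        ≤ -(p - 1 / 2) * lam * (θ₁ - (θ₂ + θ₃) / lam) * x ^ p
          - ((θ₁ - (θ₂ + θ₃) / lam) / 2) * x ^ (p - 2) * y ^ (2 : ℕ)
          + 2 * θ₃ * ((p - 2) / p) ^ ((p - 2) / 2) :=
  stmt_11_general p lam θ₁ θ₂ θ₃ hp hlam hθ₁ hθ₂ hθ₃
end

section
/- Let p > 2, γ > 2 be real numbers, let λ > 0, θ₁ > 0, K > 0, θ₂ ≥ 0, θ₃ ≥ 0. Then there exist constants C ≥ 0 and C̃ ≥ 0, depending only on p, λ, γ, θ₁, θ₂, θ₃, such that for every real ε with 0 < ε ≤ √((p−2) θ₁ λ^{γ/2}/(p (p−1) K)) and all real numbers x, y, g ≥ 0 with √λ · x ≤ y, one has −p θ₁ x^{p−2} y^γ + p θ₂ x^p + p θ₃ x^{p−2} + p x^{p−2} g y + (p(p−1)/2) ε² K (x^{p−2} + x^p) ≤ −θ₁ λ^{γ/2} x^p + C + C̃ g^{pγ/(2(γ−1))}. -/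
/-!
Half of the coercive term `p θ₁ x^(p-2) y^γ` absorbs the forcing term `p x^(p-2) g y` by
Young's inequality in `y`, leaving `x^(p-2) g^(γ/(γ-1))`, which Young's inequality with the
exponents `p/(p-2)` and `p/2` splits into `x^p + g^(pγ/(2(γ-1)))`. Through `y^γ ≥ λ^(γ/2) x^γ`
the other half dominates a multiple of the superlinear power `x^(p+γ-2)`, which absorbs every
remaining power `x^(p-2)`, `x^p` up to an additive constant; the Itô terms are among them
because the smallness of `ε` bounds `ε² K` independently of `K`.
-/

open Real

theorem mul_le_rpow_add_rpow_of_holderConjugate {r s a b : ℝ} (hrs : r.HolderConjugate s)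
    (ha : 0 ≤ a) (hb : 0 ≤ b) : a * b ≤ a ^ r + b ^ s := by
  have hr : a ^ r / r ≤ a ^ r := div_le_self (rpow_nonneg ha r) hrs.lt.le
  have hs : b ^ s / s ≤ b ^ s := div_le_self (rpow_nonneg hb s) hrs.symm.lt.le
  linarith [young_inequality_of_nonneg ha hb hrs]

theorem exists_mul_le_mul_rpow_add_mul_rpow {r s ε : ℝ} (hrs : r.HolderConjugate s)
    (hε : 0 < ε) : ∃ C ≥ 0, ∀ a b : ℝ, 0 ≤ a → 0 ≤ b → a * b ≤ ε * a ^ r + C * b ^ s := by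
  set c := ε ^ r⁻¹
  have hc : 0 < c := rpow_pos_of_pos hε _
  have hcr : c ^ r = ε := by rw [← rpow_mul hε.le, inv_mul_cancel₀ hrs.ne_zero, rpow_one]
  refine ⟨(c ^ s)⁻¹, by positivity, fun a b ha hb => ?_⟩
  calc a * b = (c * a) * (b / c) := by field_simp
    _ ≤ (c * a) ^ r + (b / c) ^ s :=
      mul_le_rpow_add_rpow_of_holderConjugate hrs (by positivity) (by positivity)
    _ = ε * a ^ r + (c ^ s)⁻¹ * b ^ s := by
      rw [mul_rpow hc.le ha, div_rpow hb hc.le, hcr, div_eq_inv_mul]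

theorem exists_mul_rpow_le_mul_rpow_add {s t A η : ℝ} (hs : 0 < s) (hst : s < t) (hA : 0 ≤ A)
    (hη : 0 < η) : ∃ C ≥ 0, ∀ x : ℝ, 0 ≤ x → A * x ^ s ≤ η * x ^ t + C := by
  have ht : t ≠ 0 := (hs.trans hst).ne'
  have hconj : (t / s).HolderConjugate (t / (t - s)) :=
    holderConjugate_iff.2 ⟨by rw [lt_div_iff₀ hs]; linarith, by field_simp; ring⟩
  obtain ⟨C, hC, young⟩ := exists_mul_le_mul_rpow_add_mul_rpow hconj hη
  refine ⟨C * A ^ (t / (t - s)), by positivity, fun x hx => ?_⟩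
  calc A * x ^ s = x ^ s * A := mul_comm _ _
    _ ≤ η * (x ^ s) ^ (t / s) + C * A ^ (t / (t - s)) := young _ _ (rpow_nonneg hx s) hA
    _ = η * x ^ t + C * A ^ (t / (t - s)) := by
      rw [← rpow_mul hx, mul_div_cancel₀ t hs.ne']

theorem rpow_sub_two_mul_le_rpow_add_rpow {p x z : ℝ} (hp : 2 < p) (hx : 0 ≤ x) (hz : 0 ≤ z) :
    x ^ (p - 2) * z ≤ x ^ p + z ^ (p / 2) := by
  have hconj : (p / (p - 2)).HolderConjugate (p / 2) :=
    holderConjugate_iff.2 ⟨by rw [lt_div_iff₀ (by linarith)]; linarith, by field_simp; ring⟩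
  have hx' : (x ^ (p - 2)) ^ (p / (p - 2)) = x ^ p := by
    rw [← rpow_mul hx, mul_div_cancel₀ p (by linarith)]
  simpa only [hx'] using mul_le_rpow_add_rpow_of_holderConjugate hconj (rpow_nonneg hx (p - 2)) hz

theorem mul_rpow_le_rpow_of_sqrt_mul_le {lam x y γ : ℝ} (hlam : 0 ≤ lam) (hx : 0 ≤ x)
    (hγ : 0 ≤ γ) (h : √lam * x ≤ y) : lam ^ (γ / 2) * x ^ γ ≤ y ^ γ :=
  calc lam ^ (γ / 2) * x ^ γ = (√lam * x) ^ γ := by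
        rw [mul_rpow (sqrt_nonneg _) hx, sqrt_eq_rpow, ← rpow_mul hlam, one_div_mul_eq_div]
    _ ≤ y ^ γ := rpow_le_rpow (by positivity) h hγ

theorem mul_sq_mul_le_of_le_sqrt_div {a b K ε : ℝ} (hb : 0 < b) (hK : 0 < K) (hε : 0 < ε)
    (h : ε ≤ √(a / (b * K))) : b * ε ^ 2 * K ≤ a := by
  have := (le_sqrt' hε).1 h
  rw [le_div_iff₀ (by positivity)] at this
  linarith

/-- Combined dissipativity estimate of the absorbing-set lemma for locally monotone
SPDEs with coercivity exponent `γ > 2`. Real powers are interpreted via `Real.rpow`. -/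
theorem stmt_14 (p γ lam θ₁ θ₂ θ₃ : ℝ) (hp : 2 < p) (hγ : 2 < γ)
    (hlam : 0 < lam) (hθ₁ : 0 < θ₁) (hθ₂ : 0 ≤ θ₂) (hθ₃ : 0 ≤ θ₃) :
    ∃ C C' : ℝ, 0 ≤ C ∧ 0 ≤ C' ∧
      ∀ K : ℝ, 0 < K → ∀ ε : ℝ, 0 < ε →
        ε ≤ Real.sqrt ((p - 2) * θ₁ * lam ^ (γ / 2) / (p * (p - 1) * K)) →
        ∀ x y g : ℝ, 0 ≤ x → 0 ≤ y → 0 ≤ g → Real.sqrt lam * x ≤ y →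
          -p * θ₁ * x ^ (p - 2) * y ^ γ + p * θ₂ * x ^ p + p * θ₃ * x ^ (p - 2)
              + p * x ^ (p - 2) * g * y
              + (p * (p - 1) / 2) * ε ^ (2 : ℕ) * K * (x ^ (p - 2) + x ^ p)
            ≤ -θ₁ * lam ^ (γ / 2) * x ^ p + C
              + C' * g ^ (p * γ / (2 * (γ - 1))) := by
  set B := lam ^ (γ / 2)
  have hB : 0 < B := rpow_pos_of_pos hlam _
  have hp0 : 0 < p := by linarith
  obtain ⟨C₁, hC₁, young⟩ :=
    exists_mul_le_mul_rpow_add_mul_rpow (HolderConjugate.conjExponent (by linarith : 1 < γ))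
      (half_pos hθ₁)
  obtain ⟨C₂, hC₂, absorb₂⟩ := exists_mul_rpow_le_mul_rpow_add (s := p - 2) (t := p + γ - 2)
    (A := p * θ₃ + (p - 2) * θ₁ * B / 2) (η := p * θ₁ * B / 4) (by linarith) (by linarith)
    (by positivity) (by positivity)
  obtain ⟨C₃, hC₃, absorb₃⟩ := exists_mul_rpow_le_mul_rpow_add (s := p) (t := p + γ - 2)
    (A := p * θ₂ + p * C₁ + (p - 2) * θ₁ * B / 2 + θ₁ * B) (η := p * θ₁ * B / 4) hp0
    (by linarith) (by positivity) (by positivity)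
  refine ⟨C₂ + C₃, p * C₁, by positivity, by positivity, ?_⟩
  intro K hK ε hε hεK x y g hx hy hg hxy
  have hcross : y * g ≤ θ₁ / 2 * y ^ γ + C₁ * g ^ (γ / (γ - 1)) := young y g hy hg
  have hsplit := rpow_sub_two_mul_le_rpow_add_rpow hp hx (rpow_nonneg hg (γ / (γ - 1)))
  rw [← rpow_mul hg, div_mul_div_comm, mul_comm γ p, mul_comm (γ - 1) 2] at hsplit
  have hcoercive : B * x ^ (p + γ - 2) ≤ x ^ (p - 2) * y ^ γ := by
    rw [show p + γ - 2 = p - 2 + γ by ring, rpow_add' hx (by linarith), mul_left_comm]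
    exact mul_le_mul_of_nonneg_left
      (mul_rpow_le_rpow_of_sqrt_mul_le hlam.le hx (by linarith : (0 : ℝ) ≤ γ) hxy)
      (rpow_nonneg hx _)
  have hIto : p * (p - 1) * ε ^ 2 * K ≤ (p - 2) * θ₁ * B :=
    mul_sq_mul_le_of_le_sqrt_div (by nlinarith : 0 < p * (p - 1)) hK hε hεK
  linarith [absorb₂ x hx, absorb₃ x hx,
    mul_le_mul_of_nonneg_left hcross (mul_nonneg hp0.le (rpow_nonneg hx (p - 2))),
    mul_le_mul_of_nonneg_left hsplit (mul_nonneg hp0.le hC₁),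
    mul_le_mul_of_nonneg_left hcoercive (by positivity : 0 ≤ p * θ₁ / 2),
    mul_le_mul_of_nonneg_right hIto (by positivity : 0 ≤ x ^ (p - 2) + x ^ p)]
end

section
/- Let p > 2 be a real number, let λ > 0, θ₁ > 0, K > 0, θ₂ ≥ 0, θ₃ ≥ 0, and set θ̃ = θ₁ − (θ₂ + θ₃)/λ; assume θ̃ > 0. Then there exist constants C ≥ 0 and C̃ ≥ 0, depending only on p, λ, θ₁, θ₂, θ₃, such that for every real ε with 0 < ε ≤ √((p−2) θ̃ λ/(p (p−1) K)) and all real numbers x, y, g ≥ 0 with √λ · x ≤ y, one has −p θ₁ x^{p−2} y² + p θ₂ x^p + p θ₃ x^{p−2} + p x^{p−2} g y + (p(p−1)/2) ε² K (x^{p−2} + x^p) ≤ −θ̃ λ x^p + C + C̃ g^p. -/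
/-!
Write `θ = θ₁ - (θ₂ + θ₃) / λ`, so that `θ λ = θ₁ λ - θ₂ - θ₃`. Young's inequality bounds
`p x^(p-2) g y` by `p θ/4 · x^(p-2) y² + p/θ · x^(p-2) g²`; the embedding `λ x² ≤ y²` turns the
remaining dissipation `-p (θ₁ - θ/4) x^(p-2) y²` into `-p (θ₁ - θ/4) λ x^p`; the smallness of `ε`
bounds the Itô correction by `(p-2)/2 · θ λ (x^(p-2) + x^p)`; and Young's inequality with exponents
`p/(p-2)`, `p/2` absorbs each of the two lower-order terms `x^(p-2)` and `x^(p-2) g²` into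
`p θ λ/8 · x^p`. The coefficients of `x^p` then add up to `-θ λ - p θ₃ ≤ -θ λ`.
-/

open Real

lemma rpow_add_two' {x q : ℝ} (hx : 0 ≤ x) (h : q + 2 ≠ 0) : x ^ (q + 2) = x ^ q * x ^ 2 := by
  simpa using rpow_add_natCast' hx (y := q) (n := 2) (by exact_mod_cast h)

/-- Young's inequality with exponents `(q + 2) / q` and `(q + 2) / 2`. -/
lemma mul_rpow_mul_sq_le_add {q a b x z : ℝ} (hq : 0 ≤ q) (ha : 0 ≤ a) (hb : 0 < b)
    (hx : 0 ≤ x) (hz : 0 ≤ z) :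
    a * x ^ q * z ^ 2 ≤ b * x ^ (q + 2) + a * (a / b) ^ (q / 2) * z ^ (q + 2) := by
  rw [rpow_add_two' hx (by positivity), rpow_add_two' hz (by positivity)]
  rcases le_total (a * z ^ 2) (b * x ^ 2) with h | h
  · have : 0 ≤ a * (a / b) ^ (q / 2) * (z ^ q * z ^ 2) := by positivity
    nlinarith [mul_le_mul_of_nonneg_left h (rpow_nonneg hx q)]
  · have hx2 : x ^ 2 ≤ a / b * z ^ 2 := by
      rw [div_mul_eq_mul_div, le_div_iff₀ hb]; linarith
    have hxq : x ^ q ≤ (a / b) ^ (q / 2) * z ^ q :=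
      calc x ^ q = (x ^ 2) ^ (q / 2) := by rw [← rpow_natCast, ← rpow_mul hx]; ring_nf
        _ ≤ (a / b * z ^ 2) ^ (q / 2) := rpow_le_rpow (by positivity) hx2 (by positivity)
        _ = (a / b) ^ (q / 2) * z ^ q := by
          rw [mul_rpow (by positivity) (by positivity), ← rpow_natCast, ← rpow_mul hz]; ring_nf
    have : 0 ≤ b * (x ^ q * x ^ 2) := by positivity
    nlinarith [mul_le_mul_of_nonneg_left hxq (mul_nonneg ha (sq_nonneg z))]

lemma mul_sq_le_of_le_sqrt_div {ε c D : ℝ} (hε : 0 < ε) (hc : 0 < c) (h : ε ≤ √(D / c)) :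
    c * ε ^ 2 ≤ D := by
  rw [le_sqrt' hε, le_div_iff₀ hc] at h
  linarith

lemma mul_sq_le_sq_of_sqrt_mul_le {lam x y : ℝ} (hlam : 0 ≤ lam) (hx : 0 ≤ x)
    (h : √lam * x ≤ y) : lam * x ^ 2 ≤ y ^ 2 :=
  calc lam * x ^ 2 = (√lam * x) ^ 2 := by rw [mul_pow, sq_sqrt hlam]
    _ ≤ y ^ 2 := pow_le_pow_left₀ (by positivity) h 2

lemma mul_le_div_four_mul_sq_add_sq_div {θ : ℝ} (g y : ℝ) (hθ : 0 < θ) :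
    g * y ≤ θ / 4 * y ^ 2 + g ^ 2 / θ := by
  have hsq : θ / 4 * y ^ 2 + g ^ 2 / θ - g * y = (θ * y - 2 * g) ^ 2 / (4 * θ) := by
    field_simp; ring
  have : 0 ≤ (θ * y - 2 * g) ^ 2 / (4 * θ) := by positivity
  linarith

theorem stmt_15_general (p lam θ₁ θ₂ θ₃ : ℝ) (hp : 2 < p)
    (hlam : 0 < lam) (hθ₂ : 0 ≤ θ₂) (hθ₃ : 0 ≤ θ₃)
    (hθ : 0 < θ₁ - (θ₂ + θ₃) / lam) :
    ∃ C C' : ℝ, 0 ≤ C ∧ 0 ≤ C' ∧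
      ∀ K : ℝ, 0 < K → ∀ ε : ℝ, 0 < ε →
        ε ≤ Real.sqrt ((p - 2) * (θ₁ - (θ₂ + θ₃) / lam) * lam / (p * (p - 1) * K)) →
        ∀ x y g : ℝ, 0 ≤ x → 0 ≤ y → 0 ≤ g → Real.sqrt lam * x ≤ y →
          -p * θ₁ * x ^ (p - 2) * y ^ (2 : ℕ) + p * θ₂ * x ^ p + p * θ₃ * x ^ (p - 2)
              + p * x ^ (p - 2) * g * y
              + (p * (p - 1) / 2) * ε ^ (2 : ℕ) * K * (x ^ (p - 2) + x ^ p)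
            ≤ -(θ₁ - (θ₂ + θ₃) / lam) * lam * x ^ p + C + C' * g ^ p := by
  set θ := θ₁ - (θ₂ + θ₃) / lam with hθ_def
  have hθlam : θ * lam = θ₁ * lam - θ₂ - θ₃ := by rw [hθ_def]; field_simp; ring
  have hp0 : 0 < p := by linarith
  have hq : 0 ≤ p - 2 := by linarith
  set b := p * θ * lam / 8
  set A := p * θ₃ + (p - 2) / 2 * θ * lam
  have hb : 0 < b := by positivity
  refine ⟨A * (A / b) ^ ((p - 2) / 2), p / θ * (p / θ / b) ^ ((p - 2) / 2),
    by positivity, by positivity, ?_⟩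
  intro K hK ε hε hεle x y g hx hy hg hxy
  have hnoise : p * (p - 1) * K * ε ^ 2 ≤ (p - 2) * θ * lam :=
    mul_sq_le_of_le_sqrt_div hε (mul_pos (mul_pos hp0 (by linarith)) hK) hεle
  have hembed : lam * x ^ p ≤ x ^ (p - 2) * y ^ 2 := by
    have hxp : x ^ p = x ^ (p - 2) * x ^ 2 := by
      simpa using rpow_add_two' hx (q := p - 2) (by simpa using hp0.ne')
    rw [hxp, mul_left_comm]
    gcongr
    exact mul_sq_le_sq_of_sqrt_mul_le hlam.le hx hxy
  have hθ_le : θ ≤ θ₁ := by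
    have : 0 ≤ (θ₂ + θ₃) / lam := by positivity
    linarith
  have hθθ₁ : 0 ≤ p * (θ₁ - θ / 4) := mul_nonneg hp0.le (by linarith)
  have hconst := mul_rpow_mul_sq_le_add hq (by positivity : 0 ≤ A) hb hx zero_le_one
  have hforce := mul_rpow_mul_sq_le_add hq (by positivity : 0 ≤ p / θ) hb hx hg
  rw [sub_add_cancel] at hconst hforce
  simp only [one_pow, one_rpow, mul_one] at hconst
  linear_combination (p * x ^ (p - 2)) * mul_le_div_four_mul_sq_add_sq_div g y hθ
    + ((x ^ (p - 2) + x ^ p) / 2) * hnoise + mul_le_mul_of_nonneg_left hembed hθθ₁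
    + hconst + hforce + (p * x ^ p) * hθlam + mul_nonneg (mul_nonneg hp0.le hθ₃) (rpow_nonneg hx p)

/-- Combined dissipativity estimate of the absorbing-set lemma for locally monotone
SPDEs in the critical case `γ = 2` with `θ̃ = θ₁ - (θ₂ + θ₃)/λ > 0`.
Real powers are interpreted via `Real.rpow`. -/
theorem stmt_15 (p lam θ₁ θ₂ θ₃ : ℝ) (hp : 2 < p)
    (hlam : 0 < lam) (hθ₁ : 0 < θ₁) (hθ₂ : 0 ≤ θ₂) (hθ₃ : 0 ≤ θ₃)
    (hθ : 0 < θ₁ - (θ₂ + θ₃) / lam) :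
    ∃ C C' : ℝ, 0 ≤ C ∧ 0 ≤ C' ∧
      ∀ K : ℝ, 0 < K → ∀ ε : ℝ, 0 < ε →
        ε ≤ Real.sqrt ((p - 2) * (θ₁ - (θ₂ + θ₃) / lam) * lam / (p * (p - 1) * K)) →
        ∀ x y g : ℝ, 0 ≤ x → 0 ≤ y → 0 ≤ g → Real.sqrt lam * x ≤ y →
          -p * θ₁ * x ^ (p - 2) * y ^ (2 : ℕ) + p * θ₂ * x ^ p + p * θ₃ * x ^ (p - 2)
              + p * x ^ (p - 2) * g * y
              + (p * (p - 1) / 2) * ε ^ (2 : ℕ) * K * (x ^ (p - 2) + x ^ p)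
            ≤ -(θ₁ - (θ₂ + θ₃) / lam) * lam * x ^ p + C + C' * g ^ p :=
  stmt_15_general p lam θ₁ θ₂ θ₃ hp hlam hθ₂ hθ₃ hθ
end
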